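/- For every unit vector ψ ∈ ℂ³ (so that ψψ† is a pure state), the output of the j = 1 Landau–Streater channel satisfies tr[ (Φ(ψψ†))² ] = 1/2; moreover the eigenvalues of Φ(ψψ†) (counted with multiplicity) are 1/2, 1/2, 0. -/

import Mathlib

open Matrix Complex

noncomputable section

/-- Spin-1 matrix `Jₓ = (1/√2)·[[0,1,0],[1,0,1],[0,1,0]]`. -/
def J1x : Matrix (Fin 3) (Fin 3) ℂ :=
  ((Real.sqrt 2 : ℂ))⁻¹ • !![0, 1, 0; 1, 0, 1; 0, 1, 0]

/-- Spin-1 matrix `J_y = (1/√2)·[[0,-i,0],[i,0,-i],[0,i,0]]`. -/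
def J1y : Matrix (Fin 3) (Fin 3) ℂ :=
  ((Real.sqrt 2 : ℂ))⁻¹ • !![0, -Complex.I, 0; Complex.I, 0, -Complex.I; 0, Complex.I, 0]

/-- Spin-1 matrix `J_z = diag(1,0,-1)`. -/
def J1z : Matrix (Fin 3) (Fin 3) ℂ := !![1, 0, 0; 0, 0, 0; 0, 0, -1]

/-- The spin-1 (j = 1) Landau–Streater map `Φ(X) = (JₓXJₓ + J_yXJ_y + J_zXJ_z)/2`. -/
def LS1 (X : Matrix (Fin 3) (Fin 3) ℂ) : Matrix (Fin 3) (Fin 3) ℂ :=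
  (1/2 : ℂ) • (J1x * X * J1x + J1y * X * J1y + J1z * X * J1z)

end

/-!
The j = 1 Landau–Streater channel is unitarily equivalent to the Werner–Holevo channel
`W(X) = (tr X · 1 - Xᵀ)/2`: conjugating by the antidiagonal involution `U` gives
`Φ(X) = U W(X) U`. For a pure state `ρ = ψψ†`, `W(ρ) = (1 - P)/2` where `P = ψ̄ψᵀ` is a rank-one
projection, so `W(ρ)²` has trace `(3 - 1)/4` and `W(ρ)` has characteristic polynomial
`(X - 1/2)² X`. Both quantities are invariant under conjugation by `U`.
-/

open Polynomial

namespace Matrix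

variable {n R : Type*} [Fintype n] [DecidableEq n] [CommRing R]

theorem trace_sq_smul_one_sub_vecMulVec (c : R) {u v : n → R} (h : u ⬝ᵥ v = 1) :
    (c • (1 - vecMulVec u v) * (c • (1 - vecMulVec u v))).trace =
      c ^ 2 * (Fintype.card n - 1) := by
  have hidem : (1 - vecMulVec u v) * (1 - vecMulVec u v) = 1 - vecMulVec u v := by
    rw [sub_mul, mul_sub, mul_sub, vecMulVec_mul_vecMulVec, dotProduct_comm, h, one_smul,
      Matrix.one_mul, Matrix.mul_one, Matrix.one_mul, sub_self, sub_zero]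
  rw [smul_mul_smul_comm, hidem, trace_smul, trace_sub, trace_one, trace_vecMulVec, h,
    smul_eq_mul, sq]

theorem charpoly_smul_one_sub_vecMulVec (c : R) {u v : n → R} (h : u ⬝ᵥ v = 1) :
    (c • (1 - vecMulVec u v)).charpoly = (X - C c) ^ (Fintype.card n - 1) * X := by
  cases subsingleton_or_nontrivial R
  · exact Subsingleton.elim _ _
  obtain ⟨k, hk⟩ : ∃ k, Fintype.card n = k + 1 := by
    refine Nat.exists_eq_add_one.mpr (Fintype.card_pos_iff.mpr ?_)
    by_contra hempty
    rw [not_nonempty_iff] at hempty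
    simp at h
  have hshift : c • (1 - vecMulVec u v) = vecMulVec (-c • u) v - scalar n (-c) := by
    rw [map_neg, scalar_apply, ← smul_one_eq_diagonal, neg_smul, neg_vecMulVec, smul_vecMulVec,
      smul_sub]
    abel
  rw [hshift, charpoly_sub_scalar, charpoly_vecMulVec, smul_dotProduct, h, smul_eq_mul, mul_one,
    hk, Nat.add_sub_cancel]
  simp only [sub_comp, pow_succ, X_comp, mul_comp, pow_comp, smul_eq_C_mul, map_neg, neg_comp,
    C_comp]
  ring

theorem charpoly_conj_of_mul_self_eq_one {U : Matrix n n R} (hU : U * U = 1)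
    (M : Matrix n n R) : (U * M * U).charpoly = M.charpoly := by
  rw [charpoly_mul_comm, ← Matrix.mul_assoc, hU, Matrix.one_mul]

theorem trace_conj_mul_conj_of_mul_self_eq_one {U : Matrix n n R} (hU : U * U = 1)
    (M : Matrix n n R) : (U * M * U * (U * M * U)).trace = (M * M).trace :=
  calc (U * M * U * (U * M * U)).trace = (U * M * (U * U) * M * U).trace := by
        simp only [Matrix.mul_assoc]
    _ = (U * (M * M) * U).trace := by rw [hU, Matrix.mul_one, Matrix.mul_assoc U M M]
    _ = (U * U * (M * M)).trace := by rw [trace_mul_comm, ← Matrix.mul_assoc]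
    _ = (M * M).trace := by rw [hU, Matrix.one_mul]

end Matrix

open Matrix

noncomputable def wernerHolevo {n K : Type*} [Fintype n] [DecidableEq n] [Field K]
    (X : Matrix n n K) : Matrix n n K :=
  ((Fintype.card n : K) - 1)⁻¹ • (X.trace • 1 - Xᵀ)

theorem wernerHolevo_vecMulVec {n K : Type*} [Fintype n] [DecidableEq n] [Field K]
    {u v : n → K} (h : u ⬝ᵥ v = 1) :
    wernerHolevo (vecMulVec u v) = ((Fintype.card n : K) - 1)⁻¹ • (1 - vecMulVec v u) := by
  rw [wernerHolevo, trace_vecMulVec, h, one_smul, transpose_vecMulVec]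

def spinFlip : Matrix (Fin 3) (Fin 3) ℂ := !![0, 0, 1; 0, -1, 0; 1, 0, 0]

theorem spinFlip_mul_self : spinFlip * spinFlip = 1 := by
  ext i j
  fin_cases i <;> fin_cases j <;> simp [spinFlip]

theorem LS1_eq_spinFlip_conj_wernerHolevo (X : Matrix (Fin 3) (Fin 3) ℂ) :
    LS1 X = spinFlip * wernerHolevo X * spinFlip := by
  have hs : ((Real.sqrt 2 : ℂ))⁻¹ ^ 2 = 1 / 2 := by
    rw [inv_pow, ← ofReal_pow, Real.sq_sqrt zero_le_two]
    norm_num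
  ext i j
  simp only [LS1, wernerHolevo, Matrix.smul_apply, Matrix.add_apply, Matrix.sub_apply, mul_apply,
    Fin.sum_univ_three, transpose_apply, one_apply, trace_fin_three]
  fin_cases i <;> fin_cases j <;> simp [J1x, J1y, J1z, spinFlip] <;> ring_nf <;>
    simp only [hs, I_sq] <;> ring_nf

/-- for every unit vector `ψ ∈ ℂ³`, the output `Φ(ψψ†)` of the j = 1
Landau–Streater channel has purity `tr[(Φ(ψψ†))²] = 1/2` and eigenvalues (with
multiplicity) `1/2, 1/2, 0`. -/
theorem landau_streater_spin1_output_purity (ψ : Fin 3 → ℂ)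
    (hψ : ∑ i, ‖ψ i‖ ^ 2 = 1) :
    ((LS1 (Matrix.vecMulVec ψ (star ψ))) * (LS1 (Matrix.vecMulVec ψ (star ψ)))).trace
        = 1/2 ∧
      (LS1 (Matrix.vecMulVec ψ (star ψ))).charpoly =
        (Polynomial.X - Polynomial.C (1/2 : ℂ)) ^ 2 * Polynomial.X := by
  have hunit : ψ ⬝ᵥ star ψ = 1 := by
    simpa [dotProduct, mul_conj, normSq_eq_norm_sq] using congrArg ofReal hψ
  have hunit' : star ψ ⬝ᵥ ψ = 1 := by rwa [dotProduct_comm]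
  rw [LS1_eq_spinFlip_conj_wernerHolevo, wernerHolevo_vecMulVec hunit]
  constructor
  · rw [trace_conj_mul_conj_of_mul_self_eq_one spinFlip_mul_self,
      trace_sq_smul_one_sub_vecMulVec _ hunit']
    norm_num
  · rw [charpoly_conj_of_mul_self_eq_one spinFlip_mul_self,
      charpoly_smul_one_sub_vecMulVec _ hunit']
    norm_num
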